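/- arXiv:1207.1645 — 4 statements merged into one kernel-verified Lean document; each statement's English description precedes it below -/
import Mathlib

section
/- Let P be a nonatomic countably additive nonnegative measure on a standard Borel space and f:[0,P(Ω)]→ℝ with f(0)=0. Then the game ν = f∘P has bounded variation (i.e. sup over chains ∅=A₀⊆A₁⊆⋯⊆Aₙ=Ω of Σ|ν(A_k)−ν(A_{k−1})| is finite) if and only if f has bounded variation on [0,P(Ω)]. -/
/-!
A chain `∅ = A₀ ⊆ ⋯ ⊆ Aₙ = Ω` yields the partition `P(A₀) ≤ ⋯ ≤ P(Aₙ)` of `[0, P Ω]`, so the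
variation of `f` bounds that of `ν`. Conversely, transport `P` to `ℝ` along a Borel embedding `g`;
the image measure has no atoms, so its distribution function is continuous, and the intermediate
value theorem gives a monotone family `A t = g ⁻¹' Iic (y t)` with `P (A t) = t` on `[0, P Ω]`.
Every partition of `[0, P Ω]` then lifts to a monotone sequence of sets, which becomes a chain
once `∅` and `Ω` are added at its ends.
-/

open MeasureTheory Set

def Nonatomic {Ω : Type*} [MeasurableSpace Ω] (P : Measure Ω) : Prop :=
  ∀ A : Set Ω, MeasurableSet A → 0 < P A →
    ∃ B : Set Ω, MeasurableSet B ∧ B ⊆ A ∧ 0 < P B ∧ P B < P A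

open Filter Topology

theorem boundedVariationOn_iff_exists_sum_abs_sub_le {α : Type*} [LinearOrder α]
    {f : α → ℝ} {s : Set α} :
    BoundedVariationOn f s ↔ ∃ M : ℝ, ∀ u : ℕ → α, Monotone u → (∀ i, u i ∈ s) →
      ∀ n, ∑ i ∈ Finset.range n, |f (u (i + 1)) - f (u i)| ≤ M := by
  have sum_edist (u : ℕ → α) (n : ℕ) : ∑ i ∈ Finset.range n, edist (f (u (i + 1))) (f (u i)) =
      ENNReal.ofReal (∑ i ∈ Finset.range n, |f (u (i + 1)) - f (u i)|) := by
    rw [ENNReal.ofReal_sum_of_nonneg fun i _ => abs_nonneg _]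
    simp only [edist_dist, Real.dist_eq]
  constructor
  · intro hf
    refine ⟨(eVariationOn f s).toReal, fun u hu us n => ?_⟩
    rw [← ENNReal.ofReal_le_iff_le_toReal hf, ← sum_edist]
    exact eVariationOn.sum_le hu us
  · rintro ⟨M, hM⟩
    refine ne_top_of_le_ne_top (ENNReal.ofReal_ne_top (r := M)) (iSup_le ?_)
    rintro ⟨n, u, hu, us⟩
    rw [sum_edist]
    exact ENNReal.ofReal_le_ofReal (hM u hu us n)

section Chains

variable {Ω : Type*} [MeasurableSpace Ω]

theorem exists_chain_extending {B : ℕ → Set Ω} (hB : ∀ i, MeasurableSet (B i))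
    (hBm : Monotone B) (n : ℕ) :
    ∃ C : ℕ → Set Ω, (∀ k, MeasurableSet (C k)) ∧ Monotone C ∧ C 0 = ∅ ∧
      C (n + 2) = univ ∧ ∀ i ≤ n, C (i + 1) = B i := by
  classical
  refine ⟨fun k => if k = 0 then ∅ else if k ≤ n + 1 then B (k - 1) else univ,
    fun k => ?_, monotone_nat_of_le_succ fun k => ?_, by simp, by simp, fun i hi => ?_⟩
  · dsimp only
    split_ifs
    exacts [.empty, hB _, .univ]
  · split_ifs <;> first
      | exact empty_subset _
      | exact subset_univ _
      | exact hBm (Nat.sub_le_sub_right k.le_succ 1)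
      | contradiction
      | omega
  · simp [show i + 1 ≤ n + 1 by omega]

theorem sum_abs_sub_le_of_chain_bound {ν : Set Ω → ℝ} {M : ℝ}
    (hM : ∀ (n : ℕ) (A : ℕ → Set Ω), (∀ k, MeasurableSet (A k)) →
      Monotone A → A 0 = ∅ → A n = univ →
      ∑ k ∈ Finset.range n, |ν (A (k + 1)) - ν (A k)| ≤ M)
    {B : ℕ → Set Ω} (hB : ∀ i, MeasurableSet (B i)) (hBm : Monotone B) (n : ℕ) :
    ∑ i ∈ Finset.range n, |ν (B (i + 1)) - ν (B i)| ≤ M := by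
  obtain ⟨C, hC, hCm, hC0, hCn, hCB⟩ := exists_chain_extending hB hBm n
  set g : ℕ → ℝ := fun k => |ν (C (k + 1)) - ν (C k)|
  have hg : ∀ k, 0 ≤ g k := fun k => abs_nonneg _
  calc ∑ i ∈ Finset.range n, |ν (B (i + 1)) - ν (B i)|
      = ∑ i ∈ Finset.range n, g (i + 1) := by
        refine Finset.sum_congr rfl fun i hi => ?_
        have hi := Finset.mem_range.mp hi
        simp only [g, hCB i (by omega), hCB (i + 1) (by omega)]
    _ ≤ ∑ k ∈ Finset.range (n + 2), g k := by
        rw [Finset.sum_range_succ', Finset.sum_range_succ]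
        linarith [hg 0, hg (n + 1)]
    _ ≤ M := hM _ C hC hCm hC0 hCn

end Chains

section DistributionFunction

variable (μ : Measure ℝ) [IsFiniteMeasure μ]

theorem abs_measureReal_Iic_sub_le (x y : ℝ) :
    |μ.real (Iic x) - μ.real (Iic y)| ≤ μ.real (uIcc x y) := by
  wlog hxy : y ≤ x generalizing x y
  · rw [abs_sub_comm, uIcc_comm]
    exact this y x (le_of_not_ge hxy)
  rw [abs_of_nonneg (sub_nonneg.mpr (measureReal_mono (Iic_subset_Iic.mpr hxy))),
    ← measureReal_sdiff (Iic_subset_Iic.mpr hxy) measurableSet_Iic]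
  refine measureReal_mono fun z hz => ?_
  rw [uIcc_of_ge hxy]
  exact ⟨le_of_lt (not_le.mp hz.2), hz.1⟩

theorem continuous_measureReal_Iic [NullSingletonClass μ] :
    Continuous fun x => μ.real (Iic x) := by
  refine continuous_iff_continuousAt.mpr fun b => ?_
  have hball : Tendsto (fun x => μ.real (Icc (b - |x - b|) (b + |x - b|))) (𝓝 b) (𝓝 0) := by
    have hδ : Tendsto (fun x : ℝ => |x - b|) (𝓝 b) (𝓝 0) := by
      simpa using (continuous_sub_right b).abs.tendsto b
    exact ((ENNReal.tendsto_toReal ENNReal.zero_ne_top).comp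
      (tendsto_measure_Icc μ b)).comp hδ
  refine tendsto_iff_dist_tendsto_zero.mpr (squeeze_zero (fun _ => dist_nonneg) (fun x => ?_) hball)
  rw [Real.dist_eq]
  refine (abs_measureReal_Iic_sub_le μ x b).trans (measureReal_mono (uIcc_subset_Icc ?_ ?_))
  · constructor <;> linarith [abs_sub_le_iff.mp (le_refl |x - b|)]
  · constructor <;> linarith [abs_nonneg (x - b)]

theorem exists_measureReal_Iic_eq [NullSingletonClass μ] {t : ℝ}
    (ht : t ∈ Ioo 0 (μ.real univ)) : ∃ y, μ.real (Iic y) = t := by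
  have htop : Tendsto (fun x => μ.real (Iic x)) atTop (𝓝 (μ.real univ)) :=
    (ENNReal.tendsto_toReal (measure_ne_top μ univ)).comp (tendsto_measure_Iic_atTop μ)
  have hbot : Tendsto (fun x => μ.real (Iic x)) atBot (𝓝 0) := by
    have h := tendsto_measure_iInter_atBot (μ := μ) (fun x => measurableSet_Iic.nullMeasurableSet)
      (fun _ _ => Iic_subset_Iic.mpr) ⟨0, measure_ne_top μ _⟩
    rw [show (⋂ x : ℝ, Iic x) = ∅ from iInter_eq_empty_iff.mpr fun y => ⟨y - 1, by simp⟩,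
      measure_empty] at h
    exact (ENNReal.tendsto_toReal ENNReal.zero_ne_top).comp h
  exact mem_range_of_exists_le_of_exists_ge (continuous_measureReal_Iic μ)
    ((hbot.eventually (gt_mem_nhds ht.1)).exists.imp fun _ => le_of_lt)
    ((htop.eventually (lt_mem_nhds ht.2)).exists.imp fun _ => le_of_lt)

theorem exists_monotoneOn_measureReal_Iic_eq [NullSingletonClass μ] :
    ∃ y : ℝ → ℝ, MonotoneOn y (Ioo 0 (μ.real univ)) ∧
      ∀ t ∈ Ioo 0 (μ.real univ), μ.real (Iic (y t)) = t := by
  choose! y hy using fun t (ht : t ∈ Ioo 0 (μ.real univ)) => exists_measureReal_Iic_eq μ ht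
  refine ⟨y, fun s hs t ht hst => ?_, hy⟩
  rcases hst.eq_or_lt with rfl | hlt
  · rfl
  refine le_of_not_gt fun hyt => hlt.not_ge ?_
  rw [← hy s hs, ← hy t ht]
  exact measureReal_mono (Iic_subset_Iic.mpr hyt.le)

end DistributionFunction

section Nonatomic

variable {Ω : Type*} [MeasurableSpace Ω] {P : Measure Ω}

theorem Nonatomic.measure_eq_zero_of_subsingleton (hP : Nonatomic P) {s : Set Ω}
    (hs : MeasurableSet s) (hs₁ : s.Subsingleton) : P s = 0 := by
  by_contra h
  obtain ⟨B, -, hBs, hB, hBlt⟩ := hP s hs (pos_iff_ne_zero.mpr h)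
  obtain ⟨b, hb⟩ := nonempty_of_measure_ne_zero hB.ne'
  have : s ⊆ B := fun x hx => hs₁ hx (hBs hb) ▸ hb
  exact hBlt.not_ge (measure_mono this)

theorem Nonatomic.nullSingletonClass_map (hP : Nonatomic P) {β : Type*} [MeasurableSpace β]
    [MeasurableSingletonClass β] {g : Ω → β} (hg : Measurable g) (hgi : Function.Injective g) :
    NullSingletonClass (P.map g) where
  measure_singleton b := by
    rw [Measure.map_apply hg (measurableSet_singleton b)]
    exact hP.measure_eq_zero_of_subsingleton (hg (measurableSet_singleton b))
      (subsingleton_singleton.preimage hgi)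

theorem Nonatomic.exists_monotone_measureReal_eq [StandardBorelSpace Ω] [IsFiniteMeasure P]
    (hP : Nonatomic P) :
    ∃ A : ℝ → Set Ω, (∀ t, MeasurableSet (A t)) ∧ Monotone A ∧
      ∀ t ∈ Icc 0 (P.real univ), P.real (A t) = t := by
  classical
  set T := P.real univ
  obtain ⟨g, hg⟩ := exists_measurableEmbedding_real Ω
  set μ := P.map g
  have := hP.nullSingletonClass_map hg.measurable hg.injective
  have hμ (s : Set ℝ) (hs : MeasurableSet s) : μ.real s = P.real (g ⁻¹' s) :=
    map_measureReal_apply hg.measurable hs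
  have hμuniv : μ.real univ = T := by simpa using hμ univ .univ
  obtain ⟨y, hy_mono, hy⟩ := exists_monotoneOn_measureReal_Iic_eq μ
  rw [hμuniv] at hy_mono hy
  -- quantiles `y t` are only available for `0 < t < T`; the endpoints are set by hand
  refine ⟨fun t => if t ≤ 0 then ∅ else if T ≤ t then univ else g ⁻¹' Iic (y t),
    fun t => ?_, fun s t hst => ?_, fun t ht => ?_⟩
  · dsimp only
    split_ifs
    exacts [.empty, .univ, hg.measurable measurableSet_Iic]
  · dsimp only
    split_ifs <;> first
      | exact empty_subset _
      | exact subset_univ _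
      | exact preimage_mono (Iic_subset_Iic.mpr (hy_mono ⟨by linarith, by linarith⟩
          ⟨by linarith, by linarith⟩ hst))
      | linarith
  · dsimp only
    split_ifs with h₀ hT
    · simp [le_antisymm h₀ ht.1]
    · exact (le_antisymm ht.2 hT).symm
    · rw [← hμ _ measurableSet_Iic]
      exact hy t ⟨lt_of_not_ge h₀, lt_of_not_ge hT⟩

end Nonatomic

theorem stmt3_general {Ω : Type*} [MeasurableSpace Ω] [StandardBorelSpace Ω]
    (P : Measure Ω) [IsFiniteMeasure P] (hP : Nonatomic P)
    (f : ℝ → ℝ) :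
    (∃ M : ℝ, ∀ (n : ℕ) (A : ℕ → Set Ω), (∀ k, MeasurableSet (A k)) →
        Monotone A → A 0 = ∅ → A n = Set.univ →
        ∑ k ∈ Finset.range n,
          |f ((P (A (k + 1))).toReal) - f ((P (A k)).toReal)| ≤ M) ↔
      BoundedVariationOn f (Set.Icc 0 (P Set.univ).toReal) := by
  rw [boundedVariationOn_iff_exists_sum_abs_sub_le]
  refine exists_congr fun M => ⟨fun hM u hu hus n => ?_, fun hM n A hA hAm _ _ => ?_⟩
  · obtain ⟨A, hA, hAm, hPA⟩ := hP.exists_monotone_measureReal_eq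
    have := sum_abs_sub_le_of_chain_bound (ν := fun s => f (P.real s)) hM
      (fun i => hA (u i)) (hAm.comp hu) n
    simpa only [hPA _ (hus _)] using this
  · exact hM (fun k => P.real (A k)) (fun i j hij => measureReal_mono (hAm hij))
      (fun k => ⟨measureReal_nonneg, measureReal_mono (subset_univ _)⟩) n

/-- The game `ν = f ∘ P` has bounded variation (supremum over chains
`∅ = A₀ ⊆ A₁ ⊆ ⋯ ⊆ Aₙ = Ω` of `Σ |ν(A_k) - ν(A_{k-1})|` is finite) iff
`f` has bounded variation on `[0, P Ω]`. -/
theorem stmt3 {Ω : Type*} [MeasurableSpace Ω] [StandardBorelSpace Ω]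
    (P : Measure Ω) [IsFiniteMeasure P] (hP : Nonatomic P)
    (f : ℝ → ℝ) (hf0 : f 0 = 0) :
    (∃ M : ℝ, ∀ (n : ℕ) (A : ℕ → Set Ω), (∀ k, MeasurableSet (A k)) →
        Monotone A → A 0 = ∅ → A n = Set.univ →
        ∑ k ∈ Finset.range n,
          |f ((P (A (k + 1))).toReal) - f ((P (A k)).toReal)| ≤ M) ↔
      BoundedVariationOn f (Set.Icc 0 (P Set.univ).toReal) :=
  stmt3_general P hP f
end

section
/- On Ω=[0,1] with Lebesgue measure λ, let f(x)=x·sin(1/x) for x≠0 and f(0)=0. Then the game ν=f∘λ is continuous with respect to the Fréchet pseudometric d_λ, but ν does not have bounded variation (the supremum over chains of the sum of absolute increments is infinite). -/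
/-!
`ν = f ∘ λ` is `d_λ`-continuous because `|λ A - λ B| ≤ λ (A ∆ B)` and `f` is uniformly continuous
on `[0, 1]`. For unbounded variation, any increasing family of points `0 ≤ u 0 ≤ ⋯ ≤ u n ≤ 1` is
realised as the measures of the chain of intervals `[0, u k]`, so the chain variation of `ν` is at
least the variation of `f` on `[0, 1]`. The latter is infinite: at the points `2 / ((2m+1)π)`
the function `f` takes the values `±2 / ((2m+1)π)` with alternating signs, and these sum like the
harmonic series.
-/

open MeasureTheory Set

/-- `f(x) = x sin(1/x)` for `x ≠ 0`, `f(0) = 0`. -/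
noncomputable def fOsc (x : ℝ) : ℝ := if x = 0 then 0 else x * Real.sin (1 / x)

open Filter Real
open scoped symmDiff

section FrechetContinuity

variable {α : Type*} [MeasurableSpace α] (μ : Measure α) [IsFiniteMeasure μ]

theorem abs_measureReal_sub_le_measureReal_symmDiff (s t : Set α) :
    |μ.real s - μ.real t| ≤ μ.real (s ∆ t) := by
  have key : ∀ s t : Set α, μ.real s ≤ μ.real t + μ.real (s ∆ t) := fun s t =>
    (measureReal_mono (sdiff_subset_iff.1 subset_union_left)).trans (measureReal_union_le _ _)
  have hts := key t s
  rw [symmDiff_comm] at hts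
  rw [abs_sub_le_iff]
  constructor <;> linarith [key s t]

theorem exists_pos_abs_comp_measureReal_sub_lt {f : ℝ → ℝ}
    (hf : ContinuousOn f (Icc 0 (μ.real univ))) {ε : ℝ} (hε : 0 < ε) :
    ∃ δ > 0, ∀ s t : Set α, μ.real (s ∆ t) < δ → |f (μ.real s) - f (μ.real t)| < ε := by
  obtain ⟨δ, hδ, hfδ⟩ := Metric.uniformContinuousOn_iff.1
    (isCompact_Icc.uniformContinuousOn_of_continuous hf) ε hε
  have mem : ∀ s, μ.real s ∈ Icc 0 (μ.real univ) := fun s =>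
    ⟨measureReal_nonneg, measureReal_mono (subset_univ s)⟩
  refine ⟨δ, hδ, fun s t hst => ?_⟩
  have hdist : dist (μ.real s) (μ.real t) < δ := by
    rw [Real.dist_eq]
    exact (abs_measureReal_sub_le_measureReal_symmDiff μ s t).trans_lt hst
  simpa only [Real.dist_eq] using hfδ _ (mem s) _ (mem t) hdist

end FrechetContinuity

theorem exists_lt_sum_abs_sub_of_not_boundedVariationOn {α : Type*} [LinearOrder α]
    {f : α → ℝ} {s : Set α} (hf : ¬BoundedVariationOn f s) (M : ℝ) :
    ∃ (n : ℕ) (u : ℕ → α), Monotone u ∧ (∀ i, u i ∈ s) ∧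
      M < ∑ i ∈ Finset.range n, |f (u (i + 1)) - f (u i)| := by
  have hM : ENNReal.ofReal M < eVariationOn f s := by
    rw [BoundedVariationOn, not_ne_iff] at hf
    simp [hf]
  obtain ⟨⟨n, u, hu, us⟩, hlt⟩ := lt_iSup_iff.1 hM
  refine ⟨n, u, hu, us, ?_⟩
  simp only [edist_dist, Real.dist_eq,
    ← ENNReal.ofReal_sum_of_nonneg fun _ _ => abs_nonneg _] at hlt
  exact (ENNReal.ofReal_lt_ofReal_iff'.1 hlt).1

section IntervalChain

/-- For `u` with values in `[0, 1]` the `λ`-measures along this chain are `0, u 0, …, u n, 1`, so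
the chain variation of `f ∘ λ` dominates the variation of `f` along `u`. -/
def intervalChain (u : ℕ → ℝ) (n : ℕ) : ℕ → Set ℝ
  | 0 => ∅
  | k + 1 => if k ≤ n then Icc 0 (u k) else univ

variable {u : ℕ → ℝ} {n : ℕ}

theorem measurableSet_intervalChain (k : ℕ) : MeasurableSet (intervalChain u n k) := by
  cases k with
  | zero => exact MeasurableSet.empty
  | succ k =>
    simp only [intervalChain]
    split_ifs
    exacts [measurableSet_Icc, MeasurableSet.univ]

theorem monotone_intervalChain (hu : Monotone u) : Monotone (intervalChain u n) := by
  refine monotone_nat_of_le_succ fun k => ?_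
  cases k with
  | zero => exact empty_subset _
  | succ k =>
    simp only [intervalChain]
    split_ifs
    · exact Icc_subset_Icc le_rfl (hu k.le_succ)
    all_goals first | exact subset_univ _ | omega

theorem measureReal_intervalChain_succ (hu : ∀ i, u i ∈ Icc 0 1) {k : ℕ} (hk : k ≤ n) :
    (volume.restrict (Icc (0 : ℝ) 1)).real (intervalChain u n (k + 1)) = u k := by
  rw [intervalChain, if_pos hk, measureReal_restrict_apply measurableSet_Icc, Icc_inter_Icc,
    max_self, min_eq_left (hu k).2, Real.volume_real_Icc_of_le (hu k).1, sub_zero]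

theorem sum_abs_sub_le_sum_abs_sub_intervalChain (f : ℝ → ℝ) (hu : ∀ i, u i ∈ Icc 0 1) :
    ∑ i ∈ Finset.range n, |f (u (i + 1)) - f (u i)| ≤
      ∑ k ∈ Finset.range (n + 2),
        |f ((volume.restrict (Icc (0 : ℝ) 1)).real (intervalChain u n (k + 1))) -
          f ((volume.restrict (Icc (0 : ℝ) 1)).real (intervalChain u n k))| := by
  rw [Finset.sum_range_succ, Finset.sum_range_succ']
  have hmiddle : ∀ i ∈ Finset.range n,
      |f ((volume.restrict (Icc (0 : ℝ) 1)).real (intervalChain u n (i + 1 + 1))) -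
        f ((volume.restrict (Icc (0 : ℝ) 1)).real (intervalChain u n (i + 1)))| =
      |f (u (i + 1)) - f (u i)| := fun i hi => by
    rw [Finset.mem_range] at hi
    rw [measureReal_intervalChain_succ hu (by omega), measureReal_intervalChain_succ hu (by omega)]
  rw [Finset.sum_congr rfl hmiddle]
  exact le_add_of_le_of_nonneg (le_add_of_nonneg_right (abs_nonneg _)) (abs_nonneg _)

end IntervalChain

theorem exists_chain_lt_sum_of_not_boundedVariationOn {f : ℝ → ℝ}
    (hf : ¬BoundedVariationOn f (Icc 0 1)) (M : ℝ) :
    ∃ (n : ℕ) (A : ℕ → Set ℝ), (∀ k, MeasurableSet (A k)) ∧ Monotone A ∧ A 0 = ∅ ∧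
      A n = univ ∧
      M < ∑ k ∈ Finset.range n,
        |f ((volume.restrict (Icc (0 : ℝ) 1)).real (A (k + 1))) -
          f ((volume.restrict (Icc (0 : ℝ) 1)).real (A k))| := by
  obtain ⟨n, u, hu, us, hM⟩ := exists_lt_sum_abs_sub_of_not_boundedVariationOn hf M
  refine ⟨n + 2, intervalChain u n, measurableSet_intervalChain, monotone_intervalChain hu, rfl,
    if_neg (by omega), hM.trans_le (sum_abs_sub_le_sum_abs_sub_intervalChain f us)⟩

theorem abs_fOsc_le (x : ℝ) : |fOsc x| ≤ |x| := by
  unfold fOsc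
  split_ifs
  · simp
  · rw [abs_mul]
    exact mul_le_of_le_one_right (abs_nonneg x) (abs_sin_le_one _)

/-- Also at `x = 0`, where the right-hand side is `0 * sin 0` because `1 / 0 = 0`. -/
theorem fOsc_eq_mul_sin (x : ℝ) : fOsc x = x * sin (1 / x) := by
  unfold fOsc
  split_ifs with hx <;> simp [hx]

theorem continuous_fOsc : Continuous fOsc := by
  refine continuous_iff_continuousAt.2 fun x => ?_
  rcases eq_or_ne x 0 with rfl | hx
  · refine continuousAt_of_locally_lipschitz one_pos 1 fun y _ => ?_
    simpa [Real.dist_eq, fOsc] using abs_fOsc_le y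
  · simp_rw [funext fOsc_eq_mul_sin]
    fun_prop (disch := assumption)

/-- At these points `sin (1 / x) = (-1) ^ m`, so `fOsc` alternates in sign with `|fOsc x| = x`. -/
noncomputable def oscPeak (m : ℕ) : ℝ := 2 / ((2 * m + 1) * π)

theorem oscPeak_pos (m : ℕ) : 0 < oscPeak m := by
  unfold oscPeak
  positivity

theorem oscPeak_antitone : Antitone oscPeak := fun k l hkl => by
  unfold oscPeak
  gcongr

theorem oscPeak_mem_Icc (m : ℕ) : oscPeak m ∈ Icc (0 : ℝ) 1 := by
  refine ⟨(oscPeak_pos m).le, (oscPeak_antitone m.zero_le).trans ?_⟩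
  rw [oscPeak, Nat.cast_zero, div_le_one (by positivity)]
  linarith [pi_gt_three]

theorem fOsc_oscPeak (m : ℕ) : fOsc (oscPeak m) = (-1) ^ m * oscPeak m := by
  rw [fOsc_eq_mul_sin, oscPeak, one_div_div,
    show (2 * (m : ℝ) + 1) * π / 2 = m * π + π / 2 by ring, sin_add_pi_div_two,
    cos_nat_mul_pi, mul_comm]

theorem oscPeak_le_abs_sub_fOsc (m : ℕ) :
    oscPeak m ≤ |fOsc (oscPeak (m + 1)) - fOsc (oscPeak m)| := by
  rw [fOsc_oscPeak, fOsc_oscPeak, pow_succ,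
    show ∀ a b c : ℝ, a * -1 * b - a * c = a * -(b + c) by intros; ring, abs_mul, abs_pow,
    abs_neg, abs_one, one_pow, one_mul, abs_neg]
  have := oscPeak_pos (m + 1)
  rw [abs_of_pos (by linarith [oscPeak_pos m])]
  linarith

theorem inv_pi_mul_one_div_succ_le_oscPeak (m : ℕ) : π⁻¹ * (1 / (m + 1)) ≤ oscPeak m := by
  rw [oscPeak, inv_mul_eq_div, div_div, div_le_div_iff₀ (by positivity) (by positivity)]
  nlinarith [pi_pos]

theorem not_boundedVariationOn_fOsc : ¬BoundedVariationOn fOsc (Icc 0 1) := by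
  have hsum : ∀ N, ENNReal.ofReal (∑ m ∈ Finset.range N, oscPeak m) ≤
      eVariationOn fOsc (Icc 0 1) := fun N =>
    calc ENNReal.ofReal (∑ m ∈ Finset.range N, oscPeak m)
        ≤ ∑ m ∈ Finset.range N, edist ((fOsc ∘ oscPeak) (m + 1)) ((fOsc ∘ oscPeak) m) := by
          rw [ENNReal.ofReal_sum_of_nonneg fun m _ => (oscPeak_pos m).le]
          gcongr with m
          rw [edist_dist, Real.dist_eq]
          exact ENNReal.ofReal_le_ofReal (oscPeak_le_abs_sub_fOsc m)
      _ ≤ eVariationOn (fOsc ∘ oscPeak) univ :=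
          eVariationOn.sum_le (f := fOsc ∘ oscPeak) (u := id) monotone_id fun _ => trivial
      _ ≤ eVariationOn fOsc (Icc 0 1) := eVariationOn.comp_le_of_antitoneOn _ _
          (oscPeak_antitone.antitoneOn _) fun m _ => oscPeak_mem_Icc m
  have htend : Tendsto (fun N => ∑ m ∈ Finset.range N, oscPeak m) atTop atTop := by
    refine tendsto_atTop_mono (fun N => Finset.sum_le_sum fun m _ =>
      inv_pi_mul_one_div_succ_le_oscPeak m) ?_
    simp_rw [← Finset.mul_sum]
    exact tendsto_sum_range_one_div_nat_succ_atTop.const_mul_atTop (inv_pos.2 pi_pos)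
  intro hbv
  obtain ⟨N, hN⟩ := (htend.eventually_gt_atTop (eVariationOn fOsc (Icc 0 1)).toReal).exists
  exact hN.not_ge ((ENNReal.ofReal_le_iff_le_toReal hbv).1 (hsum N))

/-- The game `ν = fOsc ∘ λ` (Lebesgue measure on `[0,1]`) is continuous w.r.t. the
Fréchet pseudometric `d_λ`, but its variation over chains is unbounded. -/
theorem stmt6 :
    (∀ ε > 0, ∃ δ > 0, ∀ A B : Set ℝ, MeasurableSet A → MeasurableSet B →
        ((volume.restrict (Set.Icc (0 : ℝ) 1)) (symmDiff A B)).toReal < δ →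
        |fOsc (((volume.restrict (Set.Icc (0 : ℝ) 1)) A).toReal) -
          fOsc (((volume.restrict (Set.Icc (0 : ℝ) 1)) B).toReal)| < ε) ∧
    (∀ M : ℝ, ∃ (n : ℕ) (A : ℕ → Set ℝ), (∀ k, MeasurableSet (A k)) ∧
        Monotone A ∧ A 0 = ∅ ∧ A n = Set.univ ∧
        M < ∑ k ∈ Finset.range n,
          |fOsc (((volume.restrict (Set.Icc (0 : ℝ) 1)) (A (k + 1))).toReal) -
            fOsc (((volume.restrict (Set.Icc (0 : ℝ) 1)) (A k)).toReal)|) := by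
  simp only [← measureReal_def]
  refine ⟨fun ε hε => ?_, exists_chain_lt_sum_of_not_boundedVariationOn not_boundedVariationOn_fOsc⟩
  obtain ⟨δ, hδ, h⟩ :=
    exists_pos_abs_comp_measureReal_sub_lt (volume.restrict (Icc (0 : ℝ) 1))
      continuous_fOsc.continuousOn hε
  exact ⟨δ, hδ, fun A B _ _ => h A B⟩
end

section
/- Let P be a nonatomic countably additive nonnegative measure on a standard Borel space, f:[0,P(Ω)]→ℝ with f(0)=0 and f differentiable at 0 (right derivative f′(0)). Then the game ν=f∘P is Burkill–Cesari integrable with respect to the mesh δ_P, and ∂⁺_∅(ν,F)=f′(0)·P(F) for every F∈Σ. -/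
open MeasureTheory Set

def IsPartition {Ω : Type*} [MeasurableSpace Ω] (D : Finset (Set Ω)) (E : Set Ω) : Prop :=
  (∀ I ∈ D, MeasurableSet I) ∧ ((D : Set (Set Ω)).PairwiseDisjoint id) ∧
    ⋃₀ (D : Set (Set Ω)) = E

open Filter Topology

/- Differentiability of `f` at `0` with `f 0 = 0` gives `|f x - f'(0) x| ≤ η x` for all small
`x ≥ 0`. Summing over the cells of a fine partition of `F`, whose measures add up to `P F`, gives
`|∑ f (P I) - f'(0) P F| ≤ η P F`. -/

lemma exists_abs_sub_mul_le_of_tendsto_div {f : ℝ → ℝ} {L : ℝ} (hf0 : f 0 = 0)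
    (hderiv : Tendsto (fun x => f x / x) (𝓝[>] 0) (𝓝 L)) {η : ℝ} (hη : 0 < η) :
    ∃ δ > 0, ∀ x, 0 ≤ x → x < δ → |f x - L * x| ≤ η * x := by
  obtain ⟨δ, hδ0, hδ⟩ := Metric.tendsto_nhdsWithin_nhds.mp hderiv η hη
  refine ⟨δ, hδ0, fun x hx0 hxδ => ?_⟩
  rcases hx0.eq_or_lt with rfl | hxpos
  · simp [hf0]
  have hquot : |f x / x - L| < η := by
    simpa [Real.dist_eq] using hδ (mem_Ioi.mpr hxpos) (by simpa [Real.dist_eq, abs_of_pos hxpos])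
  calc |f x - L * x| = |f x / x - L| * x := by
        rw [← abs_of_pos hxpos, ← abs_mul, abs_of_pos hxpos, sub_mul, div_mul_cancel₀ _ hxpos.ne',
          mul_comm]
    _ ≤ η * x := mul_le_mul_of_nonneg_right hquot.le hxpos.le

lemma abs_sum_sub_mul_le {ι : Type*} (s : Finset ι) (g x : ι → ℝ) {L η : ℝ}
    (h : ∀ i ∈ s, |g i - L * x i| ≤ η * x i) :
    |∑ i ∈ s, g i - L * ∑ i ∈ s, x i| ≤ η * ∑ i ∈ s, x i :=
  calc |∑ i ∈ s, g i - L * ∑ i ∈ s, x i| = |∑ i ∈ s, (g i - L * x i)| := by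
        rw [Finset.sum_sub_distrib, Finset.mul_sum]
    _ ≤ ∑ i ∈ s, |g i - L * x i| := Finset.abs_sum_le_sum_abs _ _
    _ ≤ ∑ i ∈ s, η * x i := Finset.sum_le_sum h
    _ = η * ∑ i ∈ s, x i := (Finset.mul_sum _ _ _).symm

lemma IsPartition.sum_measure {Ω : Type*} [MeasurableSpace Ω] (μ : Measure Ω)
    {D : Finset (Set Ω)} {F : Set Ω} (hD : IsPartition D F) : ∑ I ∈ D, μ I = μ F := by
  obtain ⟨hmeas, hdisj, hunion⟩ := hD
  rw [← hunion, sUnion_eq_biUnion]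
  exact (measure_biUnion_finset hdisj hmeas).symm

lemma IsPartition.sum_measureReal {Ω : Type*} [MeasurableSpace Ω] (μ : Measure Ω)
    [IsFiniteMeasure μ] {D : Finset (Set Ω)} {F : Set Ω} (hD : IsPartition D F) :
    ∑ I ∈ D, (μ I).toReal = (μ F).toReal := by
  rw [← hD.sum_measure μ, ENNReal.toReal_sum fun I _ => measure_ne_top μ I]

theorem stmt10_general {Ω : Type*} [MeasurableSpace Ω]
    (P : Measure Ω) [IsFiniteMeasure P]
    (f : ℝ → ℝ) (hf0 : f 0 = 0) (L : ℝ)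
    (hderiv : Filter.Tendsto (fun x => f x / x) (nhdsWithin 0 (Set.Ioi 0)) (nhds L)) :
    ∀ F : Set Ω, MeasurableSet F → ∀ ε > 0, ∃ δ > 0,
      ∀ D : Finset (Set Ω), IsPartition D F → (∀ I ∈ D, (P I).toReal < δ) →
        |(∑ I ∈ D, f ((P I).toReal)) - L * (P F).toReal| < ε := by
  intro F _ ε hε
  set C := (P F).toReal
  have hC : 0 ≤ C := ENNReal.toReal_nonneg
  have hη : 0 < ε / (C + 1) := by positivity
  obtain ⟨δ, hδ0, hδ⟩ := exists_abs_sub_mul_le_of_tendsto_div hf0 hderiv hη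
  refine ⟨δ, hδ0, fun D hD hmesh => ?_⟩
  have hsum := abs_sum_sub_mul_le D (fun I => f (P I).toReal) (fun I => (P I).toReal)
    fun I hI => hδ _ ENNReal.toReal_nonneg (hmesh I hI)
  rw [hD.sum_measureReal P] at hsum
  calc _ ≤ ε / (C + 1) * C := hsum
    _ < ε := by rw [div_mul_eq_mul_div, div_lt_iff₀ (by positivity)]; nlinarith

/-- If `f(0) = 0` and `f` has (right) derivative `L` at `0`, then `ν = f ∘ P` is
Burkill–Cesari integrable w.r.t. the mesh `δ_P`, with `∂⁺_∅(ν, F) = L · P(F)`. -/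
theorem stmt10 {Ω : Type*} [MeasurableSpace Ω] [StandardBorelSpace Ω]
    (P : Measure Ω) [IsFiniteMeasure P] (hP : Nonatomic P)
    (f : ℝ → ℝ) (hf0 : f 0 = 0) (L : ℝ)
    (hderiv : Filter.Tendsto (fun x => f x / x) (nhdsWithin 0 (Set.Ioi 0)) (nhds L)) :
    ∀ F : Set Ω, MeasurableSet F → ∀ ε > 0, ∃ δ > 0,
      ∀ D : Finset (Set Ω), IsPartition D F → (∀ I ∈ D, (P I).toReal < δ) →
        |(∑ I ∈ D, f ((P I).toReal)) - L * (P F).toReal| < ε :=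
  stmt10_general P f hf0 L hderiv
end

section
/- Let λ be a nonatomic nonnegative countably additive probability measure on a standard Borel space and f:[0,1]→ℝ with f(0)=0. Then the game ν=f∘λ is a Lipschitz game (there exists μ∈NA⁺ with both μ−ν and μ+ν monotone) if and only if f is Lipschitz on [0,1]; moreover in that case one may take μ=Lλ where L is a Lipschitz constant of f. -/
/-!
If `f` is `L`-Lipschitz on `[0,1]`, then `|f (λ T) - f (λ S)| ≤ L (λ T - λ S)`, so `μ = L λ` works.

Conversely, let `μ` be a finite measure controlling `ν = f ∘ λ`. Embedding `Ω` into `ℝ` and using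
the (continuous) distribution function of `λ` gives a monotone chain `B s` with `λ (B s) = s`.
Given `x ≤ y` with `δ = y - x ≤ 1 / N`, the windows `B ((k + 1) δ) \ B (k δ)`, `k < N`, are
disjoint, so one of them has `μ`-mass at most `μ Ω / N`; every window can be completed to a pair
`S ⊆ T` with `λ S = x`, `λ T = y` and `T \ S` the window, whence `|f y - f x| ≤ μ Ω / N`.
Telescoping over steps of length at most `1 / N` gives `|f y - f x| ≤ μ Ω (y - x) + μ Ω / N`, and
letting `N → ∞` shows that `f` is `μ Ω`-Lipschitz. This pigeonhole argument replaces Lyapunov's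
convexity theorem for the pair `(λ, μ)`.
-/

open MeasureTheory Set
open scoped ENNReal NNReal

open Filter Function Topology ProbabilityTheory

theorem Nonatomic.nullSingletonClass {Ω : Type*} [MeasurableSpace Ω] [MeasurableSingletonClass Ω]
    {P : Measure Ω} (hP : Nonatomic P) : NullSingletonClass P where
  measure_singleton x := by
    by_contra h
    obtain ⟨B, -, hBx, hB0, hBlt⟩ := hP {x} (measurableSet_singleton x) (pos_iff_ne_zero.2 h)
    rcases subset_singleton_iff_eq.1 hBx with rfl | rfl
    · simp at hB0
    · exact hBlt.ne rfl

theorem Nonatomic.smul {Ω : Type*} [MeasurableSpace Ω] {P : Measure Ω} (hP : Nonatomic P)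
    (c : ℝ≥0) : Nonatomic ((c : ℝ≥0∞) • P) := by
  intro A hA hcA
  simp only [Measure.smul_apply, smul_eq_mul] at hcA ⊢
  have hc : (c : ℝ≥0∞) ≠ 0 := left_ne_zero_of_mul hcA.ne'
  obtain ⟨B, hB, hBA, hB0, hBlt⟩ := hP A hA (pos_iff_ne_zero.2 (right_ne_zero_of_mul hcA.ne'))
  exact ⟨B, hB, hBA, ENNReal.mul_pos hc hB0.ne',
    (ENNReal.mul_lt_mul_iff_right hc ENNReal.coe_ne_top).2 hBlt⟩

theorem ProbabilityTheory.continuous_cdf (ρ : Measure ℝ) [IsProbabilityMeasure ρ]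
    [NullSingletonClass ρ] : Continuous (cdf ρ) := by
  refine continuous_iff_continuousAt.2 fun x => continuousAt_iff_continuous_left'_right'.2
    ⟨?_, ((cdf ρ).right_continuous x).mono Ioi_subset_Ici_self⟩
  refine (monotone_cdf ρ).continuousWithinAt_Iio_iff_leftLim_eq.2 <|
      le_antisymm ((monotone_cdf ρ).leftLim_le le_rfl) ?_
  have h := (cdf ρ).measure_singleton x
  rw [measure_cdf, measure_singleton, eq_comm, ENNReal.ofReal_eq_zero, sub_nonpos] at h
  exact h

theorem Real.exists_monotone_measureReal_eq (ρ : Measure ℝ)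
    [IsProbabilityMeasure ρ] [NullSingletonClass ρ] :
    ∃ B : ℝ → Set ℝ, (∀ s, MeasurableSet (B s)) ∧ Monotone B ∧
      ∀ s ∈ Icc (0 : ℝ) 1, ρ.real (B s) = s := by
  have hcdf : ∀ s ∈ Ioo (0 : ℝ) 1, ∃ x, cdf ρ x = s := fun s hs =>
    mem_range_of_exists_le_of_exists_ge (continuous_cdf ρ)
      ((tendsto_cdf_atBot ρ).eventually_le_const hs.1).exists
      ((tendsto_cdf_atTop ρ).eventually_const_le hs.2).exists
  choose! q hq using hcdf
  have hq_mono : MonotoneOn q (Ioo 0 1) := fun s hs s' hs' hss' => by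
    rcases hss'.eq_or_lt with rfl | hlt
    · rfl
    · exact ((monotone_cdf ρ).reflect_lt (by rwa [hq s hs, hq s' hs'])).le
  -- `cdf ρ` need not attain `0` or `1`, hence the separate endpoint cases.
  refine ⟨fun s => if s ≤ 0 then ∅ else if 1 ≤ s then univ else Iic (q s), fun s => ?_,
    fun s s' hss' => ?_, fun s hs => ?_⟩
  · dsimp only
    split_ifs <;> measurability
  · dsimp only
    split_ifs <;> try simp only [empty_subset, subset_univ]
    all_goals first
      | linarith
      | exact Iic_subset_Iic.2 (hq_mono ⟨by linarith, by linarith⟩ ⟨by linarith, by linarith⟩ hss')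
  · dsimp only
    split_ifs with h₁ h₂
    · simp [le_antisymm h₁ hs.1]
    · simp [le_antisymm hs.2 h₂]
    · rw [← cdf_eq_real, hq s ⟨not_le.1 h₁, not_le.1 h₂⟩]

theorem exists_monotone_measureReal_eq {Ω : Type*} [MeasurableSpace Ω] [StandardBorelSpace Ω]
    (P : Measure Ω) [IsProbabilityMeasure P] [NullSingletonClass P] :
    ∃ B : ℝ → Set Ω, (∀ s, MeasurableSet (B s)) ∧ Monotone B ∧
      ∀ s ∈ Icc (0 : ℝ) 1, P.real (B s) = s := by
  obtain ⟨g, hg⟩ := exists_measurableEmbedding_real Ω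
  have : IsProbabilityMeasure (P.map g) :=
    Measure.isProbabilityMeasure_map hg.measurable.aemeasurable
  have : NullSingletonClass (P.map g) := ⟨fun x => by
    rw [hg.map_apply]
    exact (subsingleton_singleton.preimage hg.injective).measure_zero P⟩
  obtain ⟨B, hBm, hB, hBP⟩ := Real.exists_monotone_measureReal_eq (P.map g)
  exact ⟨fun s => g ⁻¹' B s, fun s => hg.measurable (hBm s), fun s s' h => preimage_mono (hB h),
    fun s hs => (map_measureReal_apply hg.measurable (hBm s)).symm.trans (hBP s hs)⟩

theorem Monotone.pairwise_disjoint_on_sdiff_succ {α : Type*} {A : ℕ → Set α} (hA : Monotone A) :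
    Pairwise (Disjoint on fun k => A (k + 1) \ A k) := by
  have h (k : ℕ) : A (k + 1) \ A k = disjointed A (k + 1) := (hA.disjointed_succ (not_isMax k)).symm
  simpa only [h] using (disjoint_disjointed A).comp_of_injective (add_left_injective 1)

theorem exists_measureReal_le_div_of_pairwiseDisjoint {Ω : Type*} [MeasurableSpace Ω]
    (μ : Measure Ω) [IsFiniteMeasure μ] {W : ℕ → Set Ω} (hW : ∀ k, MeasurableSet (W k))
    (hdisj : Pairwise (Disjoint on W)) {N : ℕ} (hN : 0 < N) :
    ∃ k < N, μ.real (W k) ≤ μ.real univ / N := by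
  obtain ⟨k, hk, hle⟩ := Finset.exists_le_of_sum_le (Finset.nonempty_range_iff.2 hN.ne')
    (f := fun k => μ.real (W k)) (g := fun _ => μ.real univ / N) <| by
    rw [Finset.sum_const, Finset.card_range, nsmul_eq_mul, mul_div_cancel₀ _ (by positivity)]
    exact sum_measureReal_le_measureReal_univ (fun k _ => hW k) (hdisj.set_pairwise _)
  exact ⟨k, Finset.mem_range.1 hk, hle⟩

section Chain

variable {Ω : Type*} [MeasurableSpace Ω] {P : Measure Ω} [IsFiniteMeasure P] {B : ℝ → Set Ω}

theorem exists_subset_sdiff_eq_window (hBm : ∀ s, MeasurableSet (B s)) (hB : Monotone B)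
    (hBP : ∀ s ∈ Icc (0 : ℝ) 1, P.real (B s) = s) {s t δ : ℝ} (hs : 0 ≤ s) (ht : 0 ≤ t)
    (hδ : 0 ≤ δ) (hs1 : s + δ ≤ 1) (ht1 : t + δ ≤ 1) :
    ∃ S T, MeasurableSet S ∧ MeasurableSet T ∧ S ⊆ T ∧ P.real S = t ∧ P.real T = t + δ ∧
      T \ S = B (s + δ) \ B s := by
  set W := B (s + δ) \ B s
  -- `S` avoids the window and has measure `min t s + (max t s + δ) - (s + δ) = t`.
  set S := B (min t s) ∪ (B (max t s + δ) \ B (s + δ))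
  have hSm : MeasurableSet S := (hBm _).union ((hBm _).diff (hBm _))
  have hWm : MeasurableSet W := (hBm _).diff (hBm _)
  have hSW : Disjoint S W :=
    (disjoint_sdiff_right.mono_left (hB (min_le_right t s))).union_left
      (disjoint_sdiff_left.mono_right sdiff_subset)
  have hPS : P.real S = t := by
    have hmin : min t s ≤ s + δ := (min_le_right t s).trans (le_add_of_nonneg_right hδ)
    rw [measureReal_union (disjoint_sdiff_right.mono_left (hB hmin)) ((hBm _).diff (hBm _)),
      measureReal_sdiff (hB (by gcongr; exact le_max_right t s)) (hBm _),
      hBP _ ⟨le_min ht hs, (min_le_left t s).trans (by linarith)⟩,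
      hBP _ ⟨by positivity, by rw [← max_add_add_right]; exact max_le ht1 hs1⟩,
      hBP _ ⟨by positivity, hs1⟩]
    linarith [min_add_max t s]
  refine ⟨S, S ∪ W, hSm, hSm.union hWm, subset_union_left, hPS, ?_, ?_⟩
  · rw [measureReal_union hSW hWm, hPS, measureReal_sdiff (hB (by linarith)) (hBm _),
      hBP _ ⟨by positivity, hs1⟩, hBP _ ⟨hs, by linarith⟩]
    ring
  · rw [union_sdiff_left, hSW.symm.sdiff_eq_left]

theorem abs_sub_le_measureReal_univ_div_of_chain {μ : Measure Ω} [IsFiniteMeasure μ]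
    (hBm : ∀ s, MeasurableSet (B s)) (hB : Monotone B)
    (hBP : ∀ s ∈ Icc (0 : ℝ) 1, P.real (B s) = s) {f : ℝ → ℝ}
    (H : ∀ S T : Set Ω, MeasurableSet S → MeasurableSet T → S ⊆ T →
      |f (P.real T) - f (P.real S)| ≤ μ.real T - μ.real S)
    {N : ℕ} (hN : 0 < N) {x y : ℝ} (hx : x ∈ Icc (0 : ℝ) 1) (hy : y ∈ Icc (0 : ℝ) 1) (hxy : x ≤ y)
    (hyxN : (y - x) * N ≤ 1) :
    |f y - f x| ≤ μ.real univ / N := by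
  set δ := y - x
  have hδ : 0 ≤ δ := sub_nonneg.2 hxy
  have hA : Monotone fun n : ℕ => B (n * δ) := hB.comp fun m n h => by gcongr
  obtain ⟨k, hkN, hk⟩ := exists_measureReal_le_div_of_pairwiseDisjoint μ
    (fun k => (hBm _).diff (hBm _)) hA.pairwise_disjoint_on_sdiff_succ hN
  have hkδ : k * δ + δ ≤ 1 := by
    have : (k + 1 : ℝ) ≤ N := by exact_mod_cast hkN
    nlinarith
  obtain ⟨S, T, hS, hT, hST, hPS, hPT, hTS⟩ :=
    exists_subset_sdiff_eq_window hBm hB hBP (by positivity) hx.1 hδ hkδ (by linarith [hy.2])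
  calc |f y - f x| = |f (P.real T) - f (P.real S)| := by rw [hPS, hPT, add_sub_cancel]
    _ ≤ μ.real T - μ.real S := H S T hS hT hST
    _ = μ.real (T \ S) := (measureReal_sdiff hST hS).symm
    _ ≤ μ.real univ / N := by simpa only [hTS, Nat.cast_succ, add_one_mul] using hk

end Chain

section Telescoping

variable {g : ℝ → ℝ} {s : Set ℝ} {M : ℝ}

theorem abs_sub_le_mul_add_div_of_forall_nat (hs : s.OrdConnected) (hM : 0 ≤ M)
    (hg : ∀ N : ℕ, 0 < N → ∀ x ∈ s, ∀ y ∈ s, x ≤ y → (y - x) * N ≤ 1 → |g y - g x| ≤ M / N)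
    {N : ℕ} (hN : 0 < N) {x y : ℝ} (hx : x ∈ s) (hy : y ∈ s) (hxy : x ≤ y) :
    |g y - g x| ≤ M * (y - x) + M / N := by
  have hyx : 0 ≤ y - x := sub_nonneg.2 hxy
  have hN' : (0 : ℝ) < N := Nat.cast_pos.2 hN
  set n := ⌈(y - x) * N⌉₊
  rcases Nat.eq_zero_or_pos n with hn | hn
  · obtain rfl : y = x := by nlinarith [Nat.ceil_eq_zero.1 hn]
    simp only [sub_self, abs_zero, mul_zero, zero_add]
    positivity
  have hn' : (0 : ℝ) < n := Nat.cast_pos.2 hn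
  set p : ℕ → ℝ := fun i => x + i * ((y - x) / n)
  have hp_step (i : ℕ) : p (i + 1) - p i = (y - x) / n := by simp only [p]; push_cast; ring
  have hp0 : p 0 = x := by simp [p]
  have hpn : p n = y := by simp only [p]; field_simp; ring
  have hp_mem {i : ℕ} (hi : i ≤ n) : p i ∈ s := by
    refine hs.out hx hy ⟨le_add_of_nonneg_right (by positivity), ?_⟩
    rw [← hpn]
    simp only [p]
    gcongr
  have hstep {i : ℕ} (hi : i < n) : |g (p (i + 1)) - g (p i)| ≤ M / N := by
    refine hg N hN _ (hp_mem hi.le) _ (hp_mem hi) (by linarith [hp_step i, div_nonneg hyx hn'.le])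
      ?_
    rw [hp_step, div_mul_eq_mul_div, div_le_one hn']
    exact Nat.le_ceil _
  calc |g y - g x| = dist (g (p 0)) (g (p n)) := by rw [hp0, hpn, Real.dist_eq, abs_sub_comm]
    _ ≤ ∑ i ∈ Finset.range n, dist (g (p i)) (g (p (i + 1))) := dist_le_range_sum_dist (g ∘ p) n
    _ ≤ ∑ i ∈ Finset.range n, M / N := Finset.sum_le_sum fun i hi => by
      rw [Real.dist_eq, abs_sub_comm]
      exact hstep (Finset.mem_range.1 hi)
    _ = n * (M / N) := by simp
    _ ≤ ((y - x) * N + 1) * (M / N) := by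
      gcongr
      exact (Nat.ceil_lt_add_one (by positivity)).le
    _ = M * (y - x) + M / N := by field_simp

theorem lipschitzOnWith_of_forall_nat (hs : s.OrdConnected) {K : ℝ≥0}
    (hg : ∀ N : ℕ, 0 < N → ∀ x ∈ s, ∀ y ∈ s, x ≤ y → (y - x) * N ≤ 1 → |g y - g x| ≤ K / N) :
    LipschitzOnWith K g s := by
  have hmono {x y : ℝ} (hx : x ∈ s) (hy : y ∈ s) (hxy : x ≤ y) : |g y - g x| ≤ K * (y - x) :=
    ge_of_tendsto
      (by simpa using tendsto_const_nhds.add (tendsto_const_div_atTop_nhds_zero_nat (K : ℝ)))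
      (eventually_atTop.2 ⟨1, fun N hN =>
        abs_sub_le_mul_add_div_of_forall_nat hs K.2 hg hN hx hy hxy⟩)
  refine LipschitzOnWith.of_dist_le_mul fun x hx y hy => ?_
  rcases le_total x y with h | h
  · rw [dist_comm, dist_comm x, Real.dist_eq, Real.dist_eq, abs_of_nonneg (sub_nonneg.2 h)]
    exact hmono hx hy h
  · rw [Real.dist_eq, Real.dist_eq, abs_of_nonneg (sub_nonneg.2 h)]
    exact hmono hy hx h

end Telescoping

theorem LipschitzOnWith.abs_sub_comp_measureReal_le {Ω : Type*} [MeasurableSpace Ω]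
    {P : Measure Ω} [IsZeroOrProbabilityMeasure P] {f : ℝ → ℝ} {L : ℝ≥0}
    (hf : LipschitzOnWith L f (Icc 0 1)) {S T : Set Ω} (hST : S ⊆ T) :
    |f (P.real T) - f (P.real S)| ≤ ((L : ℝ≥0∞) • P).real T - ((L : ℝ≥0∞) • P).real S := by
  have hmem (A : Set Ω) : P.real A ∈ Icc (0 : ℝ) 1 := ⟨measureReal_nonneg, measureReal_le_one⟩
  have h := hf.dist_le_mul _ (hmem T) _ (hmem S)
  rw [Real.dist_eq, Real.dist_eq, abs_of_nonneg (sub_nonneg.2 (measureReal_mono hST))] at h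
  simpa only [measureReal_ennreal_smul_apply, ENNReal.coe_toReal, ← mul_sub] using h

theorem stmt13_general {Ω : Type*} [MeasurableSpace Ω] [StandardBorelSpace Ω]
    (P : Measure Ω) [IsProbabilityMeasure P] (hP : Nonatomic P)
    (f : ℝ → ℝ) :
    ((∃ μ : Measure Ω, IsFiniteMeasure μ ∧ Nonatomic μ ∧
        (∀ S T : Set Ω, MeasurableSet S → MeasurableSet T → S ⊆ T →
          |f ((P T).toReal) - f ((P S).toReal)| ≤ (μ T).toReal - (μ S).toReal)) ↔
      ∃ L : NNReal, LipschitzOnWith L f (Set.Icc 0 1)) ∧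
    (∀ L : NNReal, LipschitzOnWith L f (Set.Icc 0 1) →
      ∀ S T : Set Ω, MeasurableSet S → MeasurableSet T → S ⊆ T →
        |f ((P T).toReal) - f ((P S).toReal)| ≤
          (((L : ℝ≥0∞) • P) T).toReal - (((L : ℝ≥0∞) • P) S).toReal) := by
  have hLμ (L : ℝ≥0) (hL : LipschitzOnWith L f (Icc 0 1)) (S T : Set Ω) (_ : MeasurableSet S)
      (_ : MeasurableSet T) (hST : S ⊆ T) := hL.abs_sub_comp_measureReal_le (P := P) hST
  refine ⟨⟨?_, fun ⟨L, hL⟩ =>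
    ⟨(L : ℝ≥0∞) • P, P.smul_finite ENNReal.coe_ne_top, hP.smul L, hLμ L hL⟩⟩, hLμ⟩
  rintro ⟨μ, _, -, H⟩
  have := hP.nullSingletonClass
  obtain ⟨B, hBm, hB, hBP⟩ := exists_monotone_measureReal_eq P
  refine ⟨(μ univ).toNNReal, lipschitzOnWith_of_forall_nat ordConnected_Icc
    fun N hN x hx y hy hxy hyxN => ?_⟩
  rw [ENNReal.coe_toNNReal_eq_toReal]
  exact abs_sub_le_measureReal_univ_div_of_chain hBm hB hBP H hN hx hy hxy hyxN

/-- For a scalar measure game `ν = f ∘ λ`, with `λ` a nonatomic probability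
measure: `ν` is a Lipschitz game (some `μ ∈ NA⁺` satisfies
`|ν T - ν S| ≤ μ T - μ S` for all links `S ⊆ T`) iff `f` is Lipschitz on `[0,1]`;
moreover, for `L` a Lipschitz constant of `f`, one may take `μ = L λ`. -/
theorem stmt13 {Ω : Type*} [MeasurableSpace Ω] [StandardBorelSpace Ω]
    (P : Measure Ω) [IsProbabilityMeasure P] (hP : Nonatomic P)
    (f : ℝ → ℝ) (hf0 : f 0 = 0) :
    ((∃ μ : Measure Ω, IsFiniteMeasure μ ∧ Nonatomic μ ∧
        (∀ S T : Set Ω, MeasurableSet S → MeasurableSet T → S ⊆ T →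
          |f ((P T).toReal) - f ((P S).toReal)| ≤ (μ T).toReal - (μ S).toReal)) ↔
      ∃ L : NNReal, LipschitzOnWith L f (Set.Icc 0 1)) ∧
    (∀ L : NNReal, LipschitzOnWith L f (Set.Icc 0 1) →
      ∀ S T : Set Ω, MeasurableSet S → MeasurableSet T → S ⊆ T →
        |f ((P T).toReal) - f ((P S).toReal)| ≤
          (((L : ℝ≥0∞) • P) T).toReal - (((L : ℝ≥0∞) • P) S).toReal) :=
  stmt13_general P hP f
end
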